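/- Let w be a Baxter permutation of length n ≥ 1 fixed under half-turn (180°) rotation, with i left-to-right maxima and j right-to-left maxima. Then the number of Baxter permutations w' of length n+2 fixed under half-turn rotation such that deleting the entries with values n+2 and 1 from w' and subtracting 1 from each remaining entry yields w, is exactly i + j. -/

import Mathlib

/-- The entry of the word `l` at (1-indexed) position `i`, i.e. `w(i)`. -/
def entry (l : List ℕ) (i : ℕ) : ℕ := l.getD (i - 1) 0

/-- `l` is the one-line notation of a permutation of `{1,…,n}`. -/
def IsPermWord (n : ℕ) (l : List ℕ) : Prop := l.Perm (List.range' 1 n)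

/-- `l` is a Baxter permutation of length `n`: a permutation of `{1,…,n}`
avoiding the vincular patterns 3-14-2 and 2-41-3. -/
def IsBaxter (n : ℕ) (l : List ℕ) : Prop :=
  IsPermWord n l ∧
  (¬ ∃ i j k, 1 ≤ i ∧ i < j ∧ j + 1 < k ∧ k ≤ n ∧
      entry l j < entry l k ∧ entry l k < entry l i ∧ entry l i < entry l (j + 1)) ∧
  (¬ ∃ i j k, 1 ≤ i ∧ i < j ∧ j + 1 < k ∧ k ≤ n ∧
      entry l (j + 1) < entry l i ∧ entry l i < entry l k ∧ entry l k < entry l j)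

/-- `l` is fixed under quarter-turn (90°) rotation of its permutation matrix:
`w(w(i)) = n+1-i` for all `i ∈ {1,…,n}`. -/
def QuarterFixed (n : ℕ) (l : List ℕ) : Prop :=
  ∀ i, 1 ≤ i → i ≤ n → entry l (entry l i) = n + 1 - i

/-- `l` is fixed under half-turn (180°) rotation of its permutation matrix:
`w(n+1-i) = n+1-w(i)` for all `i ∈ {1,…,n}`. -/
def HalfFixed (n : ℕ) (l : List ℕ) : Prop :=
  ∀ i, 1 ≤ i → i ≤ n → entry l (n + 1 - i) = n + 1 - entry l i

/-- The entry at position `i` is a left-to-right maximum. -/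
def LRMaxAt (l : List ℕ) (i : ℕ) : Prop := ∀ k, 1 ≤ k → k < i → entry l k < entry l i

/-- The entry at position `i` is a right-to-left maximum. -/
def RLMaxAt (n : ℕ) (l : List ℕ) (i : ℕ) : Prop := ∀ k, i < k → k ≤ n → entry l k < entry l i

/-- The entry at position `i` is a left-to-right minimum. -/
def LRMinAt (l : List ℕ) (i : ℕ) : Prop := ∀ k, 1 ≤ k → k < i → entry l i < entry l k

/-- The entry at position `i` is a right-to-left minimum. -/
def RLMinAt (n : ℕ) (l : List ℕ) (i : ℕ) : Prop := ∀ k, i < k → k ≤ n → entry l i < entry l k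

/-- The (1-indexed) position of the value `v` in `l`, i.e. `w⁻¹(v)`. -/
def pos (l : List ℕ) (v : ℕ) : ℕ := l.idxOf v + 1

/-- The one-line notation of the inverse of the permutation `l` of `{1,…,n}`. -/
def invWord (n : ℕ) (l : List ℕ) : List ℕ := (List.range' 1 n).map (pos l)

/-- The number of descents of a permutation word of length `n`:
indices `i ∈ {1,…,n-1}` with `w(i) > w(i+1)`. -/
noncomputable def des (n : ℕ) (l : List ℕ) : ℕ :=
  {i : ℕ | 1 ≤ i ∧ i + 1 ≤ n ∧ entry l (i + 1) < entry l i}.ncard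

/-- Insert a new largest label `n+1` at (1-indexed) position `p`
in the permutation `l` of `{1,…,n}`. -/
def insertMax (n p : ℕ) (l : List ℕ) : List ℕ := l.insertIdx (p - 1) (n + 1)

/-- Insert a new smallest label `1` at (1-indexed) position `p`
(all old labels get increased by 1). -/
def insertMin (p : ℕ) (l : List ℕ) : List ℕ := (l.map (· + 1)).insertIdx (p - 1) 1

/-- Append the value `j` at the end of the permutation `l`
(old labels `≥ j` get increased by 1). -/
def appendEnd (j : ℕ) (l : List ℕ) : List ℕ :=
  (l.map (fun x => if x < j then x else x + 1)) ++ [j]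

/-- Standardize a word with distinct entries: replace the entries by `1,…,m` preserving
relative order (each entry is replaced by the number of entries less than or equal to it). -/
def standardize (l : List ℕ) : List ℕ := l.map (fun x => (l.filter (fun y => y ≤ x)).length)

namespace HFCC
open List

theorem perm_word_length {n : ℕ} {l : List ℕ} (h : IsPermWord n l) : l.length = n := by
  simpa using h.length_eq

theorem perm_word_nodup {n : ℕ} {l : List ℕ} (h : IsPermWord n l) : l.Nodup :=
  h.nodup_iff.2 List.nodup_range'

theorem entry_eq_getElem {n : ℕ} {l : List ℕ} (h : l.length = n) {s : ℕ} (h1 : 1 ≤ s)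
    (h2 : s ≤ n) : entry l s = l[s-1]'(by omega) :=
  List.getD_eq_getElem l 0 (by omega)

theorem entry_bounds {n : ℕ} {l : List ℕ} (h : IsPermWord n l) {s : ℕ} (h1 : 1 ≤ s) (h2 : s ≤ n) :
    1 ≤ entry l s ∧ entry l s ≤ n := by
  have hl := perm_word_length h
  have hm : entry l s ∈ l := by
    rw [entry_eq_getElem hl h1 h2]; exact List.getElem_mem _
  have := List.mem_range'_1.1 (h.mem_iff.1 hm)
  omega

theorem entry_inj {n : ℕ} {l : List ℕ} (h : IsPermWord n l) {s s' : ℕ} (h1 : 1 ≤ s) (h2 : s ≤ n)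
    (h1' : 1 ≤ s') (h2' : s' ≤ n) (he : entry l s = entry l s') : s = s' := by
  have hl := perm_word_length h
  have hnd := perm_word_nodup h
  rw [entry_eq_getElem hl h1 h2, entry_eq_getElem hl h1' h2'] at he
  have := (List.Nodup.getElem_inj_iff hnd).1 he
  omega

theorem entry_insertIdx (m : List ℕ) (x idx : ℕ) (hidx : idx ≤ m.length) {s : ℕ} (h1 : 1 ≤ s)
    (h2 : s ≤ m.length + 1) :
    entry (m.insertIdx idx x) s =
      if s = idx + 1 then x else if s ≤ idx then entry m s else entry m (s - 1) := by
  have hlen : (m.insertIdx idx x).length = m.length + 1 := List.length_insertIdx_of_le_length hidx _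
  rcases lt_trichotomy (s-1) idx with hc | hc | hc
  · rw [entry_eq_getElem hlen h1 h2, if_neg (by omega), if_pos (by omega),
      entry_eq_getElem rfl h1 (by omega)]
    exact List.getElem_insertIdx_of_lt hc (by rw [hlen]; omega)
  · rw [entry_eq_getElem hlen h1 h2, if_pos (by omega)]
    simp only [hc]
    exact List.getElem_insertIdx_self (by rw [hlen]; omega)
  · rw [entry_eq_getElem hlen h1 h2, if_neg (by omega), if_neg (by omega),
      entry_eq_getElem rfl (by omega) (by omega : s - 1 ≤ m.length)]
    have h3 : s - 1 = idx + (s - 2 - idx) + 1 := by omega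
    simp only [h3]
    have := List.getElem_insertIdx_add_succ m x idx (s - 2 - idx) (by omega)
    convert this using 2 <;> omega

theorem entry_map_succ {n : ℕ} {l : List ℕ} (hl : l.length = n) {s : ℕ} (h1 : 1 ≤ s)
    (h2 : s ≤ n) : entry (l.map (· + 1)) s = entry l s + 1 := by
  have hml : (l.map (· + 1)).length = n := by simp [hl]
  rw [entry_eq_getElem hml h1 h2, entry_eq_getElem hl h1 h2]
  simp

/-- 0-based index at which `1` is inserted. -/
def ii (n p : ℕ) : ℕ := if p < n + 3 - p then n + 1 - p else n + 2 - p

/-- The child permutation: insert `1` and `n+2` at mirror positions `n+3-p` and `p`. -/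
def chi (n p : ℕ) (l : List ℕ) : List ℕ :=
  ((l.map (· + 1)).insertIdx (ii n p) 1).insertIdx (p - 1) (n + 2)

/-- Old position `s` of the child corresponds to position `oo n p s` of the parent. -/
def oo (n p s : ℕ) : ℕ := s - (if p < s then 1 else 0) - (if n + 3 - p < s then 1 else 0)

theorem ii_le {n p : ℕ} (hp1 : 1 ≤ p) (hp2 : p ≤ n + 2) : ii n p ≤ n := by
  unfold ii; split_ifs <;> omega

theorem chi_length {n p : ℕ} {l : List ℕ} (hl : l.length = n) (hp1 : 1 ≤ p) (hp2 : p ≤ n + 2) :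
    (chi n p l).length = n + 2 := by
  have h1 : (l.map (· + 1)).length = n := by simp [hl]
  have h2 : ((l.map (· + 1)).insertIdx (ii n p) 1).length = n + 1 := by
    rw [List.length_insertIdx_of_le_length (by rw [h1]; exact ii_le hp1 hp2), h1]
  rw [chi, List.length_insertIdx_of_le_length (by omega), h2]

theorem oo_mem {n p s : ℕ} (hp1 : 1 ≤ p) (hp2 : p ≤ n + 2) (hpq : p ≠ n + 3 - p) (hs1 : 1 ≤ s)
    (hs2 : s ≤ n + 2) (hsp : s ≠ p) (hsq : s ≠ n + 3 - p) : 1 ≤ oo n p s ∧ oo n p s ≤ n := by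
  unfold oo; split_ifs <;> omega

theorem oo_lt {n p s s' : ℕ} (hpq : p ≠ n + 3 - p) (hss : s < s')
    (hsp : s ≠ p) (hsq : s ≠ n + 3 - p) (hsp' : s' ≠ p) (hsq' : s' ≠ n + 3 - p) :
    oo n p s < oo n p s' := by
  unfold oo; split_ifs <;> omega

theorem oo_surj {n p a : ℕ} (hp1 : 1 ≤ p) (hp2 : p ≤ n + 2) (hpq : p ≠ n + 3 - p) (ha1 : 1 ≤ a)
    (ha2 : a ≤ n) : ∃ s, 1 ≤ s ∧ s ≤ n + 2 ∧ s ≠ p ∧ s ≠ n + 3 - p ∧ oo n p s = a := by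
  refine ⟨if a + 1 ≤ min p (n + 3 - p) then a else
    if a + 2 ≤ max p (n + 3 - p) then a + 1 else a + 2, ?_⟩
  unfold oo
  rcases le_total p (n + 3 - p) with h | h <;>
    simp only [min_eq_left h, max_eq_right h, min_eq_right h, max_eq_left h] <;>
    split_ifs <;> omega

theorem entry_chi {n p : ℕ} {l : List ℕ} (hl : l.length = n) (hp1 : 1 ≤ p) (hp2 : p ≤ n + 2)
    (hpq : p ≠ n + 3 - p) {s : ℕ} (hs1 : 1 ≤ s) (hs2 : s ≤ n + 2) :
    entry (chi n p l) s = if s = p then n + 2 else if s = n + 3 - p then 1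
      else entry l (oo n p s) + 1 := by
  have hml : (l.map (· + 1)).length = n := by simp [hl]
  have hiin : ii n p ≤ n := ii_le hp1 hp2
  have hY : ((l.map (· + 1)).insertIdx (ii n p) 1).length = n + 1 := by
    rw [List.length_insertIdx_of_le_length (by omega), hml]
  have hout := entry_insertIdx ((l.map (· + 1)).insertIdx (ii n p) 1) (n+2) (p-1)
    (by omega) hs1 (by omega : s ≤ _ + 1)
  rw [chi, hout]
  have hEY : ∀ a, 1 ≤ a → a ≤ n + 1 → entry ((l.map (· + 1)).insertIdx (ii n p) 1) a =
      if a = ii n p + 1 then 1 else if a ≤ ii n p then entry l a + 1 else entry l (a-1) + 1 := by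
    intro a ha1 ha2
    rw [entry_insertIdx _ 1 (ii n p) (by omega) ha1 (by omega)]
    split_ifs with h1 h2
    · rfl
    · exact entry_map_succ hl ha1 (by omega)
    · exact entry_map_succ hl (by omega) (by omega)
  by_cases hsp : s = p
  · have e1 : s = p - 1 + 1 := by omega
    rw [if_pos e1, if_pos hsp]
  · have e1 : ¬ (s = p - 1 + 1) := by omega
    rw [if_neg e1, if_neg hsp]
    have hiq : p < n + 3 - p → ii n p = n + 1 - p := by intro h; unfold ii; rw [if_pos h]
    have hiq' : ¬ (p < n + 3 - p) → ii n p = n + 2 - p := by intro h; unfold ii; rw [if_neg h]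
    by_cases hsq : s = n + 3 - p
    · rw [if_pos hsq]
      rcases lt_or_gt_of_ne hpq with hlt | hgt
      · have hii : ii n p = n + 1 - p := hiq hlt
        have e2 : ¬ (s ≤ p - 1) := by omega
        rw [if_neg e2, hEY (s-1) (by omega) (by omega)]
        have e3 : s - 1 = ii n p + 1 := by omega
        rw [if_pos e3]
      · have hii : ii n p = n + 2 - p := hiq' (by omega)
        have e2 : s ≤ p - 1 := by omega
        rw [if_pos e2, hEY s hs1 (by omega)]
        have e3 : s = ii n p + 1 := by omega
        rw [if_pos e3]
    · rw [if_neg hsq]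
      rcases lt_or_gt_of_ne hsp with hlt | hgt
      · -- s < p
        have e2 : s ≤ p - 1 := by omega
        rw [if_pos e2, hEY s hs1 (by omega)]
        rcases lt_or_gt_of_ne hpq with hc | hc
        · have hii : ii n p = n + 1 - p := hiq hc
          have e3 : ¬ (s = ii n p + 1) := by omega
          have e4 : s ≤ ii n p := by omega
          have e5 : oo n p s = s := by unfold oo; split_ifs <;> omega
          rw [if_neg e3, if_pos e4, e5]
        · have hii : ii n p = n + 2 - p := hiq' (by omega)
          by_cases hso : s < n + 3 - p
          · have e3 : ¬ (s = ii n p + 1) := by omega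
            have e4 : s ≤ ii n p := by omega
            have e5 : oo n p s = s := by unfold oo; split_ifs <;> omega
            rw [if_neg e3, if_pos e4, e5]
          · have e3 : ¬ (s = ii n p + 1) := by omega
            have e4 : ¬ (s ≤ ii n p) := by omega
            have e5 : s - 1 = oo n p s := by unfold oo; split_ifs <;> omega
            rw [if_neg e3, if_neg e4, e5]
      · -- s > p
        have e2 : ¬ (s ≤ p - 1) := by omega
        rw [if_neg e2, hEY (s-1) (by omega) (by omega)]
        rcases lt_or_gt_of_ne hpq with hc | hc
        · have hii : ii n p = n + 1 - p := hiq hc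
          by_cases hso : s < n + 3 - p
          · have e3 : ¬ (s - 1 = ii n p + 1) := by omega
            have e4 : s - 1 ≤ ii n p := by omega
            have e5 : s - 1 = oo n p s := by unfold oo; split_ifs <;> omega
            rw [if_neg e3, if_pos e4, e5]
          · have e3 : ¬ (s - 1 = ii n p + 1) := by omega
            have e4 : ¬ (s - 1 ≤ ii n p) := by omega
            have e5 : s - 1 - 1 = oo n p s := by unfold oo; split_ifs <;> omega
            rw [if_neg e3, if_neg e4, e5]
        · have hii : ii n p = n + 2 - p := hiq' (by omega)
          have e3 : ¬ (s - 1 = ii n p + 1) := by omega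
          have e4 : ¬ (s - 1 ≤ ii n p) := by omega
          have e5 : s - 1 - 1 = oo n p s := by unfold oo; split_ifs <;> omega
          rw [if_neg e3, if_neg e4, e5]
theorem erase_insertIdx {α : Type*} [DecidableEq α] (a : α) :
    ∀ (i : ℕ) (l : List α), i ≤ l.length → a ∉ l → (l.insertIdx i a).erase a = l := by
  intro i
  induction i with
  | zero => intro l _ _; rw [List.insertIdx_zero, List.erase_cons_head]
  | succ i ih =>
    intro l hi ha
    match l with
    | [] => simp at hi
    | b :: t =>
      rw [List.insertIdx_succ_cons]
      have hba : ¬ (b == a) = true := by simp; intro h; exact ha (h ▸ (List.mem_cons_self (a := b) (l := t)))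
      rw [List.erase_cons, if_neg hba, ih t (by simpa using hi) (fun h => ha (List.mem_cons_of_mem b h))]

theorem insertIdx_indexOf_erase {α : Type*} [DecidableEq α] (a : α) :
    ∀ (l : List α), a ∈ l → (l.erase a).insertIdx (l.idxOf a) a = l := by
  intro l
  induction l with
  | nil => intro h; simp at h
  | cons b t ih =>
    intro h
    by_cases hb : b = a
    · subst hb
      rw [List.erase_cons_head, List.idxOf_cons_self, List.insertIdx_zero]
    · have hba : ¬ (b == a) = true := by simpa using hb
      rw [List.erase_cons, if_neg hba, List.idxOf_cons_ne t hb, List.insertIdx_succ_cons,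
        ih (by rcases List.mem_cons.1 h with h' | h'; exact absurd h'.symm hb; exact h')]

theorem mem_chi_val {n p : ℕ} {l : List ℕ} (hL : IsPermWord n l) (hp1 : 1 ≤ p) (hp2 : p ≤ n + 2)
    {x : ℕ} : x ∈ chi n p l ↔ x = n + 2 ∨ x = 1 ∨ x ∈ l.map (· + 1) := by
  have hl := perm_word_length hL
  have hml : (l.map (· + 1)).length = n := by simp [hl]
  rw [chi, List.mem_insertIdx (by rw [List.length_insertIdx_of_le_length (by rw [hml]; exact ii_le hp1 hp2), hml]; omega),
    List.mem_insertIdx (by rw [hml]; exact ii_le hp1 hp2)]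

theorem chi_perm {n p : ℕ} {l : List ℕ} (hL : IsPermWord n l) (hp1 : 1 ≤ p) (hp2 : p ≤ n + 2) :
    IsPermWord (n + 2) (chi n p l) := by
  have hl := perm_word_length hL
  have hml : (l.map (· + 1)).length = n := by simp [hl]
  have h1 : (chi n p l).Perm ((n+2) :: (l.map (· + 1)).insertIdx (ii n p) 1) :=
    List.perm_insertIdx _ _ (by rw [List.length_insertIdx_of_le_length (by rw [hml]; exact ii_le hp1 hp2), hml]; omega)
  have h2 : ((l.map (· + 1)).insertIdx (ii n p) 1).Perm (1 :: l.map (· + 1)) :=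
    List.perm_insertIdx _ _ (by rw [hml]; exact ii_le hp1 hp2)
  have h3 : (l.map (· + 1)).Perm (List.range' 2 n) := by
    have := hL.map (· + 1)
    have he : (List.range' 1 n).map (· + 1) = List.range' 2 n := by
      have := List.map_add_range' (a := 1) 1 n 1
      simpa [Nat.add_comm] using this
    rwa [he] at this
  have h4 : (chi n p l).Perm ((n+2) :: 1 :: List.range' 2 n) :=
    h1.trans ((h2.trans (h3.cons 1)).cons (n+2))
  refine h4.trans ?_
  have h5 : List.range' 1 (n + 2) = 1 :: (List.range' 2 n ++ [n + 2]) := by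
    rw [List.range'_succ]
    congr 1
    have := List.range'_concat (step := 1) (s := 2) (n := n)
    simpa [Nat.add_comm] using this
  rw [h5]
  exact (List.Perm.swap 1 (n+2) (List.range' 2 n)).trans
    ((List.perm_append_singleton (n+2) (List.range' 2 n)).symm.cons 1)

theorem chi_halfFixed {n p : ℕ} {l : List ℕ} (hL : IsPermWord n l) (hf : HalfFixed n l)
    (hp1 : 1 ≤ p) (hp2 : p ≤ n + 2) (hpq : p ≠ n + 3 - p) : HalfFixed (n + 2) (chi n p l) := by
  have hl := perm_word_length hL
  intro s hs1 hs2
  have hE := entry_chi hl hp1 hp2 hpq (s := s) hs1 hs2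
  have hE' := entry_chi hl hp1 hp2 hpq (s := n + 2 + 1 - s) (by omega) (by omega)
  by_cases hsp : s = p
  · have e1 : n + 2 + 1 - s = n + 3 - p := by omega
    rw [hE', hE, if_pos hsp, if_neg (show ¬ (n + 2 + 1 - s = p) by omega),
      if_pos (show n + 2 + 1 - s = n + 3 - p by omega)]
    omega
  · by_cases hsq : s = n + 3 - p
    · have e1 : n + 2 + 1 - s = p := by omega
      rw [hE', hE, if_neg hsp, if_pos hsq, if_pos e1]
      omega
    · have h1 : n + 2 + 1 - s ≠ p := by omega
      have h2 : n + 2 + 1 - s ≠ n + 3 - p := by omega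
      rw [hE', hE, if_neg hsp, if_neg hsq, if_neg h1, if_neg h2]
      have hoo := oo_mem hp1 hp2 hpq hs1 hs2 hsp hsq
      have e2 : oo n p (n + 2 + 1 - s) = n + 1 - oo n p s := by
        unfold oo; split_ifs <;> omega
      rw [e2, hf (oo n p s) hoo.1 hoo.2]
      have := (entry_bounds hL hoo.1 hoo.2).2
      omega

theorem chi_reduce {n p : ℕ} {l : List ℕ} (hL : IsPermWord n l) (hp1 : 1 ≤ p) (hp2 : p ≤ n + 2) :
    (((chi n p l).erase (n + 2)).erase 1).map (· - 1) = l := by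
  have hl := perm_word_length hL
  have hml : (l.map (· + 1)).length = n := by simp [hl]
  have hlt : ∀ x ∈ l, 1 ≤ x ∧ x ≤ n := by
    intro x hx
    have := List.mem_range'_1.1 (hL.mem_iff.1 hx)
    omega
  have h1 : n + 2 ∉ (l.map (· + 1)).insertIdx (ii n p) 1 := by
    rw [List.mem_insertIdx (by rw [hml]; exact ii_le hp1 hp2)]
    rintro (h | h)
    · omega
    · rcases List.mem_map.1 h with ⟨x, hx, hx'⟩
      have := hlt x hx; omega
  have h2 : (1:ℕ) ∉ l.map (· + 1) := by
    intro h
    rcases List.mem_map.1 h with ⟨x, hx, hx'⟩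
    have := hlt x hx; omega
  rw [chi, erase_insertIdx _ _ _ (by rw [List.length_insertIdx_of_le_length (by rw [hml]; exact ii_le hp1 hp2), hml]; omega) h1,
    erase_insertIdx _ _ _ (by rw [hml]; exact ii_le hp1 hp2) h2, List.map_map]
  have : ((· - 1) ∘ (· + 1) : ℕ → ℕ) = id := by funext x; simp
  rw [this, List.map_id]
theorem entry_chi_at_p {n p : ℕ} {l : List ℕ} (hl : l.length = n) (hp1 : 1 ≤ p) (hp2 : p ≤ n + 2)
    (hpq : p ≠ n + 3 - p) : entry (chi n p l) p = n + 2 := by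
  rw [entry_chi hl hp1 hp2 hpq hp1 hp2, if_pos rfl]

theorem entry_chi_at_q {n p : ℕ} {l : List ℕ} (hl : l.length = n) (hp1 : 1 ≤ p) (hp2 : p ≤ n + 2)
    (hpq : p ≠ n + 3 - p) : entry (chi n p l) (n + 3 - p) = 1 := by
  rw [entry_chi hl hp1 hp2 hpq (by omega) (by omega), if_neg (by omega), if_pos rfl]

theorem entry_chi_old {n p : ℕ} {l : List ℕ} (hl : l.length = n) (hp1 : 1 ≤ p) (hp2 : p ≤ n + 2)
    (hpq : p ≠ n + 3 - p) {s : ℕ} (hs1 : 1 ≤ s) (hs2 : s ≤ n + 2) (hsp : s ≠ p)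
    (hsq : s ≠ n + 3 - p) : entry (chi n p l) s = entry l (oo n p s) + 1 := by
  rw [entry_chi hl hp1 hp2 hpq hs1 hs2, if_neg hsp, if_neg hsq]

/-- Rotating a 3-14-2 occurrence of a half-fixed permutation word. -/
theorem rot1 {N : ℕ} {m : List ℕ} (hm : IsPermWord N m) (hf : HalfFixed N m) {i j k : ℕ}
    (h1 : 1 ≤ i) (h2 : i < j) (h3 : j + 1 < k) (h4 : k ≤ N)
    (v1 : entry m j < entry m k) (v2 : entry m k < entry m i) (v3 : entry m i < entry m (j+1)) :
    1 ≤ N+1-k ∧ N+1-k < N-j ∧ (N-j) + 1 < N+1-i ∧ N+1-i ≤ N ∧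
    entry m (N-j) < entry m (N+1-i) ∧ entry m (N+1-i) < entry m (N+1-k) ∧
    entry m (N+1-k) < entry m ((N-j)+1) := by
  have hfi := hf i h1 (by omega)
  have hfj := hf j (by omega) (by omega)
  have hfj1 := hf (j+1) (by omega) (by omega)
  have hfk := hf k (by omega) h4
  have bi := entry_bounds hm h1 (by omega : i ≤ N)
  have bj := entry_bounds hm (by omega : 1 ≤ j) (by omega : j ≤ N)
  have bj1 := entry_bounds hm (by omega : 1 ≤ j+1) (by omega : j+1 ≤ N)
  have bk := entry_bounds hm (by omega : 1 ≤ k) h4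
  have e1 : N - j = N + 1 - (j+1) := by omega
  have e2 : (N - j) + 1 = N + 1 - j := by omega
  refine ⟨by omega, by omega, by omega, by omega, ?_, ?_, ?_⟩
  · rw [e1, hfj1, hfi]; omega
  · rw [hfi, hfk]; omega
  · rw [e2, hfk, hfj]; omega

/-- Rotating a 2-41-3 occurrence of a half-fixed permutation word. -/
theorem rot2 {N : ℕ} {m : List ℕ} (hm : IsPermWord N m) (hf : HalfFixed N m) {i j k : ℕ}
    (h1 : 1 ≤ i) (h2 : i < j) (h3 : j + 1 < k) (h4 : k ≤ N)
    (v1 : entry m (j+1) < entry m i) (v2 : entry m i < entry m k) (v3 : entry m k < entry m j) :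
    1 ≤ N+1-k ∧ N+1-k < N-j ∧ (N-j) + 1 < N+1-i ∧ N+1-i ≤ N ∧
    entry m ((N-j)+1) < entry m (N+1-k) ∧ entry m (N+1-k) < entry m (N+1-i) ∧
    entry m (N+1-i) < entry m (N-j) := by
  have hfi := hf i h1 (by omega)
  have hfj := hf j (by omega) (by omega)
  have hfj1 := hf (j+1) (by omega) (by omega)
  have hfk := hf k (by omega) h4
  have bi := entry_bounds hm h1 (by omega : i ≤ N)
  have bj := entry_bounds hm (by omega : 1 ≤ j) (by omega : j ≤ N)
  have bj1 := entry_bounds hm (by omega : 1 ≤ j+1) (by omega : j+1 ≤ N)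
  have bk := entry_bounds hm (by omega : 1 ≤ k) h4
  have e1 : N - j = N + 1 - (j+1) := by omega
  have e2 : (N - j) + 1 = N + 1 - j := by omega
  refine ⟨by omega, by omega, by omega, by omega, ?_, ?_, ?_⟩
  · rw [e2, hfj, hfk]; omega
  · rw [hfk, hfi]; omega
  · rw [e1, hfi, hfj1]; omega

section Touch

variable {n p : ℕ} {l : List ℕ} (hL : IsPermWord n l) (hB : IsBaxter n l)
  (hp1 : 1 ≤ p) (hp2 : p ≤ n + 2) (hpq : p ≠ n + 3 - p)

include hL hB hp1 hp2 hpq in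
theorem O1_touch {i j k : ℕ} (h1 : 1 ≤ i) (h2 : i < j) (h3 : j + 1 < k) (h4 : k ≤ n + 2)
    (v1 : entry (chi n p l) j < entry (chi n p l) k)
    (v2 : entry (chi n p l) k < entry (chi n p l) i)
    (v3 : entry (chi n p l) i < entry (chi n p l) (j+1)) :
    j + 1 = p ∨ j = n + 3 - p := by
  have hl := perm_word_length hL
  have hC := chi_perm hL hp1 hp2
  by_contra hcon
  push_neg at hcon
  have bnd : ∀ s, 1 ≤ s → s ≤ n + 2 → 1 ≤ entry (chi n p l) s ∧ entry (chi n p l) s ≤ n + 2 :=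
    fun s a b => entry_bounds hC a b
  have bi := bnd i h1 (by omega)
  have bj := bnd j (by omega) (by omega)
  have bj1 := bnd (j+1) (by omega) (by omega)
  have bk := bnd k (by omega) h4
  have hip : i ≠ p := by
    intro he; rw [he, entry_chi_at_p hl hp1 hp2 hpq] at v3; omega
  have hiq : i ≠ n + 3 - p := by
    intro he; rw [he, entry_chi_at_q hl hp1 hp2 hpq] at v2; omega
  have hjp : j ≠ p := by
    intro he; rw [he, entry_chi_at_p hl hp1 hp2 hpq] at v1; omega
  have hj1q : j + 1 ≠ n + 3 - p := by
    intro he; rw [he, entry_chi_at_q hl hp1 hp2 hpq] at v3; omega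
  have hkp : k ≠ p := by
    intro he; rw [he, entry_chi_at_p hl hp1 hp2 hpq] at v2; omega
  have hkq : k ≠ n + 3 - p := by
    intro he; rw [he, entry_chi_at_q hl hp1 hp2 hpq] at v1; omega
  have hadj : oo n p (j+1) = oo n p j + 1 := by
    unfold oo
    have := hcon.1; have := hcon.2
    split_ifs <;> omega
  have Ei := entry_chi_old hl hp1 hp2 hpq h1 (by omega : i ≤ n + 2) hip hiq
  have Ej := entry_chi_old hl hp1 hp2 hpq (by omega : 1 ≤ j) (by omega : j ≤ n + 2) hjp hcon.2
  have Ej1 : entry (chi n p l) (j+1) = entry l (oo n p j + 1) + 1 := by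
    rw [entry_chi_old hl hp1 hp2 hpq (by omega) (by omega) hcon.1 hj1q, hadj]
  have Ek := entry_chi_old hl hp1 hp2 hpq (by omega : 1 ≤ k) h4 hkp hkq
  exact hB.2.1 ⟨oo n p i, oo n p j, oo n p k,
    (oo_mem hp1 hp2 hpq h1 (by omega) hip hiq).1,
    oo_lt hpq h2 hip hiq hjp hcon.2,
    by have := oo_lt hpq h3 hcon.1 hj1q hkp hkq; omega,
    (oo_mem hp1 hp2 hpq (by omega) h4 hkp hkq).2,
    by omega, by omega, by omega⟩

include hL hB hp1 hp2 hpq in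
theorem O2_touch {i j k : ℕ} (h1 : 1 ≤ i) (h2 : i < j) (h3 : j + 1 < k) (h4 : k ≤ n + 2)
    (v1 : entry (chi n p l) (j+1) < entry (chi n p l) i)
    (v2 : entry (chi n p l) i < entry (chi n p l) k)
    (v3 : entry (chi n p l) k < entry (chi n p l) j) :
    j = p ∨ j + 1 = n + 3 - p := by
  have hl := perm_word_length hL
  have hC := chi_perm hL hp1 hp2
  by_contra hcon
  push_neg at hcon
  have bnd : ∀ s, 1 ≤ s → s ≤ n + 2 → 1 ≤ entry (chi n p l) s ∧ entry (chi n p l) s ≤ n + 2 :=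
    fun s a b => entry_bounds hC a b
  have bi := bnd i h1 (by omega)
  have bj := bnd j (by omega) (by omega)
  have bj1 := bnd (j+1) (by omega) (by omega)
  have bk := bnd k (by omega) h4
  have hip : i ≠ p := by
    intro he; rw [he, entry_chi_at_p hl hp1 hp2 hpq] at v2; omega
  have hiq : i ≠ n + 3 - p := by
    intro he; rw [he, entry_chi_at_q hl hp1 hp2 hpq] at v1; omega
  have hjq : j ≠ n + 3 - p := by
    intro he; rw [he, entry_chi_at_q hl hp1 hp2 hpq] at v3; omega
  have hj1p : j + 1 ≠ p := by
    intro he; rw [he, entry_chi_at_p hl hp1 hp2 hpq] at v1; omega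
  have hkp : k ≠ p := by
    intro he; rw [he, entry_chi_at_p hl hp1 hp2 hpq] at v3; omega
  have hkq : k ≠ n + 3 - p := by
    intro he; rw [he, entry_chi_at_q hl hp1 hp2 hpq] at v2; omega
  have hadj : oo n p (j+1) = oo n p j + 1 := by
    unfold oo
    have := hcon.1; have := hcon.2
    split_ifs <;> omega
  have Ei := entry_chi_old hl hp1 hp2 hpq h1 (by omega : i ≤ n + 2) hip hiq
  have Ej := entry_chi_old hl hp1 hp2 hpq (by omega : 1 ≤ j) (by omega : j ≤ n + 2) hcon.1 hjq
  have Ej1 : entry (chi n p l) (j+1) = entry l (oo n p j + 1) + 1 := by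
    rw [entry_chi_old hl hp1 hp2 hpq (by omega) (by omega) hj1p hcon.2, hadj]
  have Ek := entry_chi_old hl hp1 hp2 hpq (by omega : 1 ≤ k) h4 hkp hkq
  exact hB.2.2 ⟨oo n p i, oo n p j, oo n p k,
    (oo_mem hp1 hp2 hpq h1 (by omega) hip hiq).1,
    oo_lt hpq h2 hip hiq hcon.1 hjq,
    by have := oo_lt hpq h3 hj1p hcon.2 hkp hkq; omega,
    (oo_mem hp1 hp2 hpq (by omega) h4 hkp hkq).2,
    by omega, by omega, by omega⟩

end Touch
section NoA

variable {n p : ℕ} {l : List ℕ} (hL : IsPermWord n l) (hB : IsBaxter n l) (hf : HalfFixed n l)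
  (hp1 : 1 ≤ p) (hp2 : p ≤ n + 2) (hpq : p ≠ n + 3 - p)

include hL hB hp1 hp2 hpq in
theorem noA_C1 (hple : p + 1 ≤ n + 2) (hq1 : n + 3 - p ≠ p + 1) (hq2 : n + 3 - p ≠ p - 1)
    (hmax : LRMaxAt l (oo n p (p+1))) :
    ∀ i k, 1 ≤ i → i < p - 1 → p < k → k ≤ n + 2 →
      entry (chi n p l) (p-1) < entry (chi n p l) k →
      entry (chi n p l) k < entry (chi n p l) i → False := by
  have hl := perm_word_length hL
  have hC := chi_perm hL hp1 hp2
  intro i k h1 h2 h3 h4 v1 v2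
  have hp3 : 3 ≤ p := by omega
  have hts : oo n p (p+1) = oo n p (p-1) + 1 := by unfold oo; split_ifs <;> omega
  have Ep1 := entry_chi_old hl hp1 hp2 hpq (by omega : 1 ≤ p-1) (by omega) (by omega)
    (by omega : p - 1 ≠ n + 3 - p)
  have Et := entry_chi_old hl hp1 hp2 hpq (by omega : 1 ≤ p+1) hple (by omega)
    (by omega : p + 1 ≠ n + 3 - p)
  have hiq : i ≠ n + 3 - p := by
    intro he
    rw [he, entry_chi_at_q hl hp1 hp2 hpq] at v2
    have := (entry_bounds hC (by omega : 1 ≤ k) h4).1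
    omega
  have hkq : k ≠ n + 3 - p := by
    intro he
    rw [he, entry_chi_at_q hl hp1 hp2 hpq] at v1
    have := (entry_bounds hC (by omega : 1 ≤ p-1) (by omega)).1
    omega
  have Ei := entry_chi_old hl hp1 hp2 hpq h1 (by omega : i ≤ n+2) (by omega) hiq
  have Ek := entry_chi_old hl hp1 hp2 hpq (by omega : 1 ≤ k) h4 (by omega) hkq
  have hik := oo_lt (n := n) hpq (show i < p - 1 by omega) (by omega) hiq (by omega)
    (by omega : p - 1 ≠ n + 3 - p)
  have hit : oo n p i < oo n p (p+1) := oo_lt hpq (by omega) (by omega) hiq (by omega) hq1.symm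
  have hbi := oo_mem hp1 hp2 hpq h1 (by omega : i ≤ n+2) (by omega) hiq
  have hbk := oo_mem hp1 hp2 hpq (by omega : 1 ≤ k) h4 (by omega) hkq
  have hbt := oo_mem hp1 hp2 hpq (by omega : 1 ≤ p+1) hple (by omega) (by omega)
  by_cases hk1 : k = p + 1
  · subst hk1
    have := hmax (oo n p i) hbi.1 hit
    omega
  · have hkt : oo n p (p+1) < oo n p k := oo_lt hpq (by omega) (by omega) hq1.symm (by omega) hkq
    have := hmax (oo n p i) hbi.1 hit
    exact hB.2.1 ⟨oo n p i, oo n p (p-1), oo n p k, hbi.1, hik, by omega, hbk.2,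
      by omega, by omega, by rw [← hts]; omega⟩

include hL hB hf hp1 hp2 hpq in
theorem noA_C1s (hq : n + 3 - p = p - 1) (hmax : LRMaxAt l (p-1)) :
    ∀ i k, 1 ≤ i → i < p - 1 → p < k → k ≤ n + 2 →
      entry (chi n p l) (p-1) < entry (chi n p l) k →
      entry (chi n p l) k < entry (chi n p l) i → False := by
  have hl := perm_word_length hL
  intro i k h1 h2 h3 h4 v1 v2
  have hp3 : 3 ≤ p := by omega
  have h2p : 2 * p = n + 4 := by omega
  have hmin : ∀ k', p - 2 < k' → k' ≤ n → entry l (p-2) < entry l k' := by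
    intro k' hk1 hk2
    have ha1 : 1 ≤ n + 1 - k' := by omega
    have ha2 : n + 1 - k' < p - 1 := by omega
    have hLa := hmax (n + 1 - k') ha1 ha2
    have hfa := hf (n + 1 - k') ha1 (by omega)
    have hft := hf (p - 1) (by omega) (by omega)
    have e1 : n + 1 - (n + 1 - k') = k' := by omega
    have e2 : n + 1 - (p - 1) = p - 2 := by omega
    rw [e1] at hfa
    rw [e2] at hft
    have b1 := (entry_bounds hL (by omega : 1 ≤ p - 1) (by omega)).2
    have b2 := (entry_bounds hL ha1 (by omega)).2
    omega
  have hiq : i ≠ n + 3 - p := by omega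
  have hkq : k ≠ n + 3 - p := by omega
  have Ei := entry_chi_old hl hp1 hp2 hpq h1 (by omega : i ≤ n+2) (by omega) hiq
  have Ek := entry_chi_old hl hp1 hp2 hpq (by omega : 1 ≤ k) h4 (by omega) hkq
  have hoi : oo n p i = i := by unfold oo; split_ifs <;> omega
  have hok : oo n p k = k - 2 := by unfold oo; split_ifs <;> omega
  rw [hoi] at Ei
  rw [hok] at Ek
  have Eq1 : entry (chi n p l) (p-1) = 1 := by
    rw [← hq]; exact entry_chi_at_q hl hp1 hp2 hpq
  by_cases hk1 : k = p + 1
  · subst hk1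
    have := hmax i h1 (by omega)
    have e3 : p + 1 - 2 = p - 1 := by omega
    rw [e3] at Ek
    omega
  · have hk2 : p - 1 < k - 2 := by omega
    by_cases hi1 : i = p - 2
    · subst hi1
      have := hmin (k-2) (by omega) (by omega)
      omega
    · have hv2 : entry l (k-2) < entry l i := by omega
      have hLi := hmax i h1 (by omega)
      have hmini := hmin (k-2) (by omega) (by omega)
      exact hB.2.1 ⟨i, p - 2, k - 2, h1, by omega, by omega, by omega,
        hmini, hv2, by
          have e4 : p - 2 + 1 = p - 1 := by omega
          rw [e4]
          exact hLi⟩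

include hL hp1 hp2 hpq in
theorem noA'_C1 (hple : p + 1 ≤ n + 2) (hq1 : n + 3 - p ≠ p + 1)
    (hmax : LRMaxAt l (oo n p (p+1))) :
    ∀ i k, 1 ≤ i → i < p → p + 1 < k → k ≤ n + 2 →
      entry (chi n p l) (p+1) < entry (chi n p l) i →
      entry (chi n p l) i < entry (chi n p l) k → False := by
  have hl := perm_word_length hL
  have hC := chi_perm hL hp1 hp2
  intro i k h1 h2 h3 h4 v1 v2
  have Et := entry_chi_old hl hp1 hp2 hpq (by omega : 1 ≤ p+1) hple (by omega) hq1.symm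
  have hiq : i ≠ n + 3 - p := by
    intro he
    rw [he, entry_chi_at_q hl hp1 hp2 hpq] at v1
    have := (entry_bounds hC (by omega : 1 ≤ p+1) hple).1
    omega
  have Ei := entry_chi_old hl hp1 hp2 hpq h1 (by omega : i ≤ n+2) (by omega) hiq
  have hit : oo n p i < oo n p (p+1) := oo_lt hpq (by omega) (by omega) hiq (by omega) hq1.symm
  have hbi := oo_mem hp1 hp2 hpq h1 (by omega : i ≤ n+2) (by omega) hiq
  have := hmax (oo n p i) hbi.1 hit
  omega

include hL hp1 hp2 hpq in
theorem noA_C2 (hp3 : 2 ≤ p) (hq2 : n + 3 - p ≠ p - 1) (hmax : RLMaxAt n l (oo n p (p-1))) :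
    ∀ i k, 1 ≤ i → i < p - 1 → p < k → k ≤ n + 2 →
      entry (chi n p l) (p-1) < entry (chi n p l) k →
      entry (chi n p l) k < entry (chi n p l) i → False := by
  have hl := perm_word_length hL
  have hC := chi_perm hL hp1 hp2
  intro i k h1 h2 h3 h4 v1 v2
  have Es := entry_chi_old hl hp1 hp2 hpq (by omega : 1 ≤ p-1) (by omega) (by omega) hq2.symm
  have hkq : k ≠ n + 3 - p := by
    intro he
    rw [he, entry_chi_at_q hl hp1 hp2 hpq] at v1
    have := (entry_bounds hC (by omega : 1 ≤ p-1) (by omega)).1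
    omega
  have Ek := entry_chi_old hl hp1 hp2 hpq (by omega : 1 ≤ k) h4 (by omega) hkq
  have hsk : oo n p (p-1) < oo n p k := oo_lt hpq (by omega) (by omega) hq2.symm (by omega) hkq
  have hbk := oo_mem hp1 hp2 hpq (by omega : 1 ≤ k) h4 (by omega) hkq
  have := hmax (oo n p k) hsk hbk.2
  omega

include hL hB hp1 hp2 hpq in
theorem noA'_C2 (hple : p + 1 ≤ n + 2) (hp3 : 2 ≤ p) (hq1 : n + 3 - p ≠ p + 1)
    (hq2 : n + 3 - p ≠ p - 1) (hmax : RLMaxAt n l (oo n p (p-1))) :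
    ∀ i k, 1 ≤ i → i < p → p + 1 < k → k ≤ n + 2 →
      entry (chi n p l) (p+1) < entry (chi n p l) i →
      entry (chi n p l) i < entry (chi n p l) k → False := by
  have hl := perm_word_length hL
  have hC := chi_perm hL hp1 hp2
  intro i k h1 h2 h3 h4 v1 v2
  have hts : oo n p (p+1) = oo n p (p-1) + 1 := by unfold oo; split_ifs <;> omega
  have Es := entry_chi_old hl hp1 hp2 hpq (by omega : 1 ≤ p-1) (by omega) (by omega) hq2.symm
  have Et := entry_chi_old hl hp1 hp2 hpq (by omega : 1 ≤ p+1) hple (by omega) hq1.symm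
  have hiq : i ≠ n + 3 - p := by
    intro he
    rw [he, entry_chi_at_q hl hp1 hp2 hpq] at v1
    have := (entry_bounds hC (by omega : 1 ≤ p+1) hple).1
    omega
  have hkq : k ≠ n + 3 - p := by
    intro he
    rw [he, entry_chi_at_q hl hp1 hp2 hpq] at v2
    have := (entry_bounds hC (by omega : 1 ≤ i) (by omega)).1
    omega
  have Ei := entry_chi_old hl hp1 hp2 hpq h1 (by omega : i ≤ n+2) (by omega) hiq
  have Ek := entry_chi_old hl hp1 hp2 hpq (by omega : 1 ≤ k) h4 (by omega) hkq
  have hbi := oo_mem hp1 hp2 hpq h1 (by omega : i ≤ n+2) (by omega) hiq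
  have hbk := oo_mem hp1 hp2 hpq (by omega : 1 ≤ k) h4 (by omega) hkq
  have hkt : oo n p (p+1) < oo n p k := oo_lt hpq (by omega) (by omega) hq1.symm (by omega) hkq
  have hks : oo n p (p-1) < oo n p k := by omega
  have hRk := hmax (oo n p k) hks hbk.2
  by_cases hi1 : i = p - 1
  · subst hi1
    omega
  · have his : oo n p i < oo n p (p-1) := oo_lt hpq (by omega) (by omega) hiq (by omega) hq2.symm
    exact hB.2.2 ⟨oo n p i, oo n p (p-1), oo n p k, hbi.1, his, by omega, hbk.2,
      by rw [← hts]; omega, by omega, by omega⟩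

include hL hB hf hp1 hp2 hpq in
theorem noA'_C2s (hp3 : 2 ≤ p) (hq : n + 3 - p = p + 1) (hmax : RLMaxAt n l (p-1)) :
    ∀ i k, 1 ≤ i → i < p → p + 1 < k → k ≤ n + 2 →
      entry (chi n p l) (p+1) < entry (chi n p l) i →
      entry (chi n p l) i < entry (chi n p l) k → False := by
  have hl := perm_word_length hL
  intro i k h1 h2 h3 h4 v1 v2
  have h2p : 2 * p = n + 2 := by omega
  have hmin : ∀ a, 1 ≤ a → a < p → entry l p < entry l a := by
    intro a ha1 ha2
    have hk1 : p - 1 < n + 1 - a := by omega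
    have hRa := hmax (n + 1 - a) hk1 (by omega)
    have hfa := hf a ha1 (by omega)
    have hfs := hf (p-1) (by omega) (by omega)
    have e2 : n + 1 - (p - 1) = p := by omega
    rw [e2] at hfs
    have b1 := (entry_bounds hL (by omega : 1 ≤ p - 1) (by omega)).2
    have b2 := (entry_bounds hL ha1 (by omega)).2
    have b3 := (entry_bounds hL (by omega : 1 ≤ n + 1 - a) (by omega)).2
    omega
  have hiq : i ≠ n + 3 - p := by omega
  have hkq : k ≠ n + 3 - p := by omega
  have Ei := entry_chi_old hl hp1 hp2 hpq h1 (by omega : i ≤ n+2) (by omega) hiq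
  have Ek := entry_chi_old hl hp1 hp2 hpq (by omega : 1 ≤ k) h4 (by omega) hkq
  have hoi : oo n p i = i := by unfold oo; split_ifs <;> omega
  have hok : oo n p k = k - 2 := by unfold oo; split_ifs <;> omega
  rw [hoi] at Ei
  rw [hok] at Ek
  by_cases hi1 : i = p - 1
  · subst hi1
    have := hmax (k-2) (by omega) (by omega)
    omega
  · by_cases hk1 : k = p + 2
    · subst hk1
      have := hmin i h1 (by omega)
      have e3 : p + 2 - 2 = p := by omega
      rw [e3] at Ek
      omega
    · have hRk := hmax (k-2) (by omega) (by omega)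
      have hmini := hmin i h1 (by omega)
      exact hB.2.2 ⟨i, p - 1, k - 2, h1, by omega, by omega, by omega,
        by
          have e4 : p - 1 + 1 = p := by omega
          rw [e4]
          omega, by omega, by omega⟩

end NoA
def Phi (n t : ℕ) : ℕ := if 2*t ≤ n+1 then t else t+1
def Psi (n t : ℕ) : ℕ := if 2*t ≤ n then t+1 else t+2

def Cond (n p : ℕ) (l : List ℕ) : Prop :=
  ∃ t, 1 ≤ t ∧ t ≤ n ∧ ((LRMaxAt l t ∧ p = Phi n t) ∨ (RLMaxAt n l t ∧ p = Psi n t))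

theorem cond_bounds {n p : ℕ} {l : List ℕ} (hC : Cond n p l) :
    1 ≤ p ∧ p ≤ n + 2 ∧ p ≠ n + 3 - p := by
  obtain ⟨t, ht1, ht2, hc⟩ := hC
  rcases hc with ⟨_, hpe⟩ | ⟨_, hpe⟩
  · rw [hpe]; unfold Phi; split_ifs <;> exact ⟨by omega, by omega, by omega⟩
  · rw [hpe]; unfold Psi; split_ifs <;> exact ⟨by omega, by omega, by omega⟩

theorem chi_baxter_of_cond {n p : ℕ} {l : List ℕ} (hL : IsPermWord n l) (hB : IsBaxter n l)
    (hf : HalfFixed n l) (hn : 1 ≤ n) (hC : Cond n p l) : IsBaxter (n + 2) (chi n p l) := by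
  obtain ⟨hp1, hp2, hpq⟩ := cond_bounds hC
  have hl := perm_word_length hL
  have hCperm := chi_perm hL hp1 hp2
  have hChf := chi_halfFixed hL hf hp1 hp2 hpq
  obtain ⟨t, ht1, ht2, hc⟩ := hC
  -- build the two "no occurrence at the insertion site" facts
  have NA : ∀ i k, 1 ≤ i → i < p - 1 → p < k → k ≤ n + 2 →
      entry (chi n p l) (p-1) < entry (chi n p l) k →
      entry (chi n p l) k < entry (chi n p l) i → False := by
    rcases hc with ⟨hmax, hpe⟩ | ⟨hmax, hpe⟩
    · by_cases hbr : 2*t ≤ n+1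
      · have hpt : p = t := by rw [hpe]; unfold Phi; rw [if_pos hbr]
        have hoo : oo n p (p+1) = t := by unfold oo; split_ifs <;> omega
        exact noA_C1 hL hB hp1 hp2 hpq (by omega) (by omega) (by omega) (by rw [hoo]; exact hmax)
      · have hpt : p = t + 1 := by rw [hpe]; unfold Phi; rw [if_neg hbr]
        by_cases hsp : 2*t = n+2
        · exact noA_C1s hL hB hf hp1 hp2 hpq (by omega)
            (by rw [show p - 1 = t by omega]; exact hmax)
        · have hoo : oo n p (p+1) = t := by unfold oo; split_ifs <;> omega
          exact noA_C1 hL hB hp1 hp2 hpq (by omega) (by omega) (by omega)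
            (by rw [hoo]; exact hmax)
    · by_cases hbr : 2*t ≤ n
      · have hpt : p = t + 1 := by rw [hpe]; unfold Psi; rw [if_pos hbr]
        have hoo : oo n p (p-1) = t := by unfold oo; split_ifs <;> omega
        exact noA_C2 hL hp1 hp2 hpq (by omega) (by omega) (by rw [hoo]; exact hmax)
      · have hpt : p = t + 2 := by rw [hpe]; unfold Psi; rw [if_neg hbr]
        have hoo : oo n p (p-1) = t := by unfold oo; split_ifs <;> omega
        exact noA_C2 hL hp1 hp2 hpq (by omega) (by omega) (by rw [hoo]; exact hmax)
  have NA' : ∀ i k, 1 ≤ i → i < p → p + 1 < k → k ≤ n + 2 →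
      entry (chi n p l) (p+1) < entry (chi n p l) i →
      entry (chi n p l) i < entry (chi n p l) k → False := by
    rcases hc with ⟨hmax, hpe⟩ | ⟨hmax, hpe⟩
    · by_cases hbr : 2*t ≤ n+1
      · have hpt : p = t := by rw [hpe]; unfold Phi; rw [if_pos hbr]
        have hoo : oo n p (p+1) = t := by unfold oo; split_ifs <;> omega
        exact noA'_C1 hL hp1 hp2 hpq (by omega) (by omega) (by rw [hoo]; exact hmax)
      · have hpt : p = t + 1 := by rw [hpe]; unfold Phi; rw [if_neg hbr]
        have hoo : oo n p (p+1) = t := by unfold oo; split_ifs <;> omega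
        exact noA'_C1 hL hp1 hp2 hpq (by omega) (by omega) (by rw [hoo]; exact hmax)
    · by_cases hbr : 2*t ≤ n
      · have hpt : p = t + 1 := by rw [hpe]; unfold Psi; rw [if_pos hbr]
        by_cases hsp : 2*t = n
        · exact noA'_C2s hL hB hf hp1 hp2 hpq (by omega) (by omega)
            (by rw [show p - 1 = t by omega]; exact hmax)
        · have hoo : oo n p (p-1) = t := by unfold oo; split_ifs <;> omega
          exact noA'_C2 hL hB hp1 hp2 hpq (by omega) (by omega) (by omega) (by omega)
            (by rw [hoo]; exact hmax)
      · have hpt : p = t + 2 := by rw [hpe]; unfold Psi; rw [if_neg hbr]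
        by_cases hte : t = n
        · -- p = n + 2 : vacuous
          intro i k _ _ h3 h4 _ _
          omega
        · have hoo : oo n p (p-1) = t := by unfold oo; split_ifs <;> omega
          exact noA'_C2 hL hB hp1 hp2 hpq (by omega) (by omega) (by omega) (by omega)
            (by rw [hoo]; exact hmax)
  refine ⟨hCperm, ?_, ?_⟩
  · rintro ⟨i, j, k, h1, h2, h3, h4, v1, v2, v3⟩
    rcases O1_touch hL hB hp1 hp2 hpq h1 h2 h3 h4 v1 v2 v3 with hjp | hjq
    · have hj : j = p - 1 := by omega
      subst hj
      exact NA i k h1 h2 (by omega) h4 v1 v2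
    · obtain ⟨r1, r2, r3, r4, w1, w2, w3⟩ :=
        rot1 hCperm hChf h1 h2 h3 h4 v1 v2 v3
      have ej : n + 2 - j = p - 1 := by omega
      rw [ej] at r2 r3 w1 w3
      exact NA (n+2+1-k) (n+2+1-i) r1 r2 (by omega) (by omega) w1 w2
  · rintro ⟨i, j, k, h1, h2, h3, h4, v1, v2, v3⟩
    rcases O2_touch hL hB hp1 hp2 hpq h1 h2 h3 h4 v1 v2 v3 with hjp | hj1q
    · subst hjp
      exact NA' i k h1 h2 h3 h4 v1 v2
    · obtain ⟨r1, r2, r3, r4, w1, w2, w3⟩ :=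
        rot2 hCperm hChf h1 h2 h3 h4 v1 v2 v3
      have ej : n + 2 - j = p := by omega
      rw [ej] at r2 r3 w1 w3
      exact NA' (n+2+1-k) (n+2+1-i) r1 r2 r3 (by omega) w1 w2
theorem cond_of_chi_baxter {n p : ℕ} {l : List ℕ} (hL : IsPermWord n l) (hf : HalfFixed n l)
    (hn : 1 ≤ n) (hp1 : 1 ≤ p) (hp2 : p ≤ n + 2) (hpq : p ≠ n + 3 - p)
    (hX : IsBaxter (n + 2) (chi n p l)) : Cond n p l := by
  have hl := perm_word_length hL
  by_contra hnc
  by_cases hpl : p = 1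
  · exact hnc ⟨1, le_refl 1, hn, Or.inl ⟨fun k hk1 hk2 => absurd hk2 (by omega),
      by unfold Phi; rw [if_pos (by omega)]; omega⟩⟩
  by_cases hpr : p = n + 2
  · refine hnc ⟨n, hn, le_refl n, Or.inr ⟨fun k hk1 hk2 => absurd hk2 (by omega), ?_⟩⟩
    unfold Psi; rw [if_neg (by omega)]; omega
  -- now 2 ≤ p ≤ n + 1
  have hp2' : 2 ≤ p := by omega
  have hpn1 : p ≤ n + 1 := by omega
  have Ep : entry (chi n p l) p = n + 2 := entry_chi_at_p hl hp1 hp2 hpq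
  by_cases hq1 : n + 3 - p = p + 1
  · -- q = p + 1
    have hRL : ¬ RLMaxAt n l (p-1) := fun h => hnc ⟨p-1, by omega, by omega,
      Or.inr ⟨h, by unfold Psi; rw [if_pos (by omega)]; omega⟩⟩
    unfold RLMaxAt at hRL
    push_neg at hRL
    obtain ⟨b, hb1, hb2, hb3⟩ := hRL
    have hbne : entry l b ≠ entry l (p-1) := fun he =>
      absurd (entry_inj hL (by omega) hb2 (by omega) (by omega) he) (by omega)
    have Eq1 : entry (chi n p l) (p+1) = 1 := by
      rw [← hq1]; exact entry_chi_at_q hl hp1 hp2 hpq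
    have Es : entry (chi n p l) (p-1) = entry l (p-1) + 1 := by
      rw [entry_chi_old hl hp1 hp2 hpq (by omega) (by omega) (by omega) (by omega),
        show oo n p (p-1) = p - 1 by unfold oo; split_ifs <;> omega]
    have Eb : entry (chi n p l) (b+2) = entry l b + 1 := by
      rw [entry_chi_old hl hp1 hp2 hpq (by omega) (by omega) (by omega) (by omega),
        show oo n p (b+2) = b by unfold oo; split_ifs <;> omega]
    have hbnd := entry_bounds hL (by omega : 1 ≤ b) hb2
    have hbnds := entry_bounds hL (by omega : 1 ≤ p - 1) (by omega : p - 1 ≤ n)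
    exact hX.2.2 ⟨p-1, p, b+2, by omega, by omega, by omega, by omega,
      by rw [Eq1, Es]; omega, by rw [Es, Eb]; omega,
      by rw [Eb, Ep]; omega⟩
  by_cases hq2 : n + 3 - p = p - 1
  · -- q = p - 1
    have hLR : ¬ LRMaxAt l (p-1) := fun h => hnc ⟨p-1, by omega, by omega,
      Or.inl ⟨h, by unfold Phi; rw [if_neg (by omega)]; omega⟩⟩
    unfold LRMaxAt at hLR
    push_neg at hLR
    obtain ⟨a, ha1, ha2, ha3⟩ := hLR
    have hane : entry l a ≠ entry l (p-1) := fun he =>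
      absurd (entry_inj hL ha1 (by omega) (by omega) (by omega) he) (by omega)
    have Eq1 : entry (chi n p l) (p-1) = 1 := by
      rw [← hq2]; exact entry_chi_at_q hl hp1 hp2 hpq
    have Ea : entry (chi n p l) a = entry l a + 1 := by
      rw [entry_chi_old hl hp1 hp2 hpq ha1 (by omega) (by omega) (by omega),
        show oo n p a = a by unfold oo; split_ifs <;> omega]
    have Et : entry (chi n p l) (p+1) = entry l (p-1) + 1 := by
      rw [entry_chi_old hl hp1 hp2 hpq (by omega) (by omega) (by omega) (by omega),
        show oo n p (p+1) = p - 1 by unfold oo; split_ifs <;> omega]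
    have hand := entry_bounds hL ha1 (by omega : a ≤ n)
    have hbnds := entry_bounds hL (by omega : 1 ≤ p - 1) (by omega : p - 1 ≤ n)
    exact hX.2.1 ⟨a, p-1, p+1, ha1, by omega, by omega, by omega,
      by rw [Eq1, Et]; omega, by rw [Et, Ea]; omega,
      by rw [show p - 1 + 1 = p by omega, Ea, Ep]; omega⟩
  -- generic case
  have hqg : n + 3 - p ≤ p - 2 ∨ p + 2 ≤ n + 3 - p := by omega
  set t := oo n p (p+1) with hts
  set s := oo n p (p-1) with hss
  have hst : t = s + 1 := by rw [hts, hss]; unfold oo; split_ifs <;> omega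
  have hbt : 1 ≤ t ∧ t ≤ n := oo_mem hp1 hp2 hpq (by omega) (by omega) (by omega) (by omega)
  have hbs : 1 ≤ s ∧ s ≤ n := oo_mem hp1 hp2 hpq (by omega) (by omega) (by omega) (by omega)
  have hPhi : Phi n t = p := by
    rcases hqg with h | h
    · rw [show t = p - 1 by rw [hts]; unfold oo; split_ifs <;> omega]
      unfold Phi; rw [if_neg (by omega)]; omega
    · rw [show t = p by rw [hts]; unfold oo; split_ifs <;> omega]
      unfold Phi; rw [if_pos (by omega)]
  have hPsi : Psi n s = p := by
    rcases hqg with h | h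
    · rw [show s = p - 2 by rw [hss]; unfold oo; split_ifs <;> omega]
      unfold Psi; rw [if_neg (by omega)]; omega
    · rw [show s = p - 1 by rw [hss]; unfold oo; split_ifs <;> omega]
      unfold Psi; rw [if_pos (by omega)]; omega
  have hLR : ¬ LRMaxAt l t := fun h => hnc ⟨t, hbt.1, hbt.2, Or.inl ⟨h, hPhi.symm⟩⟩
  have hRL : ¬ RLMaxAt n l s := fun h => hnc ⟨s, hbs.1, hbs.2, Or.inr ⟨h, hPsi.symm⟩⟩
  unfold LRMaxAt at hLR
  unfold RLMaxAt at hRL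
  push_neg at hLR
  push_neg at hRL
  obtain ⟨a, ha1, ha2, ha3⟩ := hLR
  obtain ⟨b, hb1, hb2, hb3⟩ := hRL
  have hat : entry l t < entry l a := by
    have : entry l a ≠ entry l t := fun he =>
      absurd (entry_inj hL ha1 (by omega) hbt.1 hbt.2 he) (by omega)
    omega
  have hbs' : entry l s < entry l b := by
    have : entry l b ≠ entry l s := fun he =>
      absurd (entry_inj hL (by omega) hb2 hbs.1 hbs.2 he) (by omega)
    omega
  have Et : entry (chi n p l) (p+1) = entry l t + 1 :=
    entry_chi_old hl hp1 hp2 hpq (by omega) (by omega) (by omega) (by omega)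
  have Es : entry (chi n p l) (p-1) = entry l s + 1 :=
    entry_chi_old hl hp1 hp2 hpq (by omega) (by omega) (by omega) (by omega)
  have hba := entry_bounds hL ha1 (by omega : a ≤ n)
  have hbb := entry_bounds hL (by omega : 1 ≤ b) hb2
  have hbts := entry_bounds hL hbt.1 hbt.2
  have hbss := entry_bounds hL hbs.1 hbs.2
  -- position of a value-index in chi
  have posb : p + 1 < b + 1 ∨ True := Or.inr trivial
  by_cases hc1 : a = s
  · -- entry l s > entry l t
    have hwst : entry l t < entry l s := by rw [← hc1]; exact hat
    have hbnet : b ≠ t := fun he => by rw [he] at hb3; omega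
    obtain ⟨sb, hsb1, hsb2, hsb3, hsb4, hsb5⟩ := oo_surj hp1 hp2 hpq (by omega : 1 ≤ b) hb2
    have hsbp : p + 1 < sb := by
      rcases lt_trichotomy sb (p+1) with h | h | h
      · have := oo_lt hpq h hsb3 hsb4 (by omega) (by omega)
        rw [hsb5, ← hts] at this; omega
      · rw [h, ← hts] at hsb5; omega
      · exact h
    have Eb : entry (chi n p l) sb = entry l b + 1 := by
      rw [entry_chi_old hl hp1 hp2 hpq hsb1 hsb2 hsb3 hsb4, hsb5]
    exact hX.2.2 ⟨p-1, p, sb, by omega, by omega, by omega, hsb2,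
      by rw [show p + 1 = p + 1 from rfl] at Et; rw [Et, Es]; omega,
      by rw [Es, Eb]; omega, by rw [Eb, Ep]; omega⟩
  · have ha0s : a < s := by omega
    obtain ⟨sa, hsa1, hsa2, hsa3, hsa4, hsa5⟩ := oo_surj hp1 hp2 hpq ha1 (by omega : a ≤ n)
    have hsap : sa < p - 1 := by
      rcases lt_trichotomy sa (p-1) with h | h | h
      · exact h
      · rw [h, ← hss] at hsa5; omega
      · have := oo_lt hpq h (by omega) (by omega) hsa3 hsa4
        rw [hsa5, ← hss] at this; omega
    have Ea : entry (chi n p l) sa = entry l a + 1 := by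
      rw [entry_chi_old hl hp1 hp2 hpq hsa1 hsa2 hsa3 hsa4, hsa5]
    by_cases hwst : entry l t < entry l s
    · have hbnet : b ≠ t := fun he => by rw [he] at hb3; omega
      obtain ⟨sb, hsb1, hsb2, hsb3, hsb4, hsb5⟩ := oo_surj hp1 hp2 hpq (by omega : 1 ≤ b) hb2
      have hsbp : p + 1 < sb := by
        rcases lt_trichotomy sb (p+1) with h | h | h
        · have := oo_lt hpq h hsb3 hsb4 (by omega) (by omega)
          rw [hsb5, ← hts] at this; omega
        · rw [h, ← hts] at hsb5; omega
        · exact h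
      have Eb : entry (chi n p l) sb = entry l b + 1 := by
        rw [entry_chi_old hl hp1 hp2 hpq hsb1 hsb2 hsb3 hsb4, hsb5]
      by_cases hab : entry l a < entry l b
      · exact hX.2.2 ⟨sa, p, sb, hsa1, by omega, by omega, hsb2,
          by rw [Et, Ea]; omega, by rw [Ea, Eb]; omega, by rw [Eb, Ep]; omega⟩
      · have hne : entry l a ≠ entry l b := fun he =>
          absurd (entry_inj hL ha1 (by omega) (by omega) hb2 he) (by omega)
        exact hX.2.1 ⟨sa, p-1, sb, hsa1, by omega, by omega, hsb2,
          by rw [Es, Eb]; omega, by rw [Eb, Ea]; omega,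
          by rw [show p - 1 + 1 = p by omega, Ea, Ep]; omega⟩
    · have hne : entry l s ≠ entry l t := fun he =>
        absurd (entry_inj hL hbs.1 hbs.2 hbt.1 hbt.2 he) (by omega)
      exact hX.2.1 ⟨sa, p-1, p+1, hsa1, by omega, by omega, by omega,
        by rw [Es, Et]; omega, by rw [Et, Ea]; omega,
        by rw [show p - 1 + 1 = p by omega, Ea, Ep]; omega⟩
theorem reconstruct {n : ℕ} {l l' : List ℕ} (hL : IsPermWord n l) (hn : 1 ≤ n)
    (hP : IsPermWord (n+2) l') (hf' : HalfFixed (n+2) l')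
    (hred : ((l'.erase (n+2)).erase 1).map (· - 1) = l) :
    ∃ p, 1 ≤ p ∧ p ≤ n + 2 ∧ p ≠ n + 3 - p ∧ l' = chi n p l := by
  have hlen : l'.length = n + 2 := perm_word_length hP
  have hnd : l'.Nodup := perm_word_nodup hP
  have hmem : n + 2 ∈ l' := hP.mem_iff.2 (List.mem_range'_1.2 ⟨by omega, by omega⟩)
  have hmem1 : (1:ℕ) ∈ l' := hP.mem_iff.2 (List.mem_range'_1.2 ⟨by omega, by omega⟩)
  set ip := l'.idxOf (n+2) with hipdef
  have hip : ip < n + 2 := by rw [← hlen]; exact List.idxOf_lt_length_iff.2 hmem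
  set p := ip + 1 with hpdef
  have hEp : entry l' p = n + 2 := by
    rw [entry_eq_getElem hlen (by omega) (by omega)]
    have : p - 1 = ip := by omega
    simp only [this]
    exact List.getElem_idxOf (by omega)
  have hEq : entry l' (n + 3 - p) = 1 := by
    have := hf' p (by omega) (by omega)
    rw [hEp] at this
    have e1 : n + 2 + 1 - p = n + 3 - p := by omega
    rw [e1] at this
    omega
  have hpq : p ≠ n + 3 - p := by
    intro he
    rw [← he, hEp] at hEq
    omega
  have h1 : (l'.erase (n+2)).insertIdx ip (n+2) = l' := insertIdx_indexOf_erase (n+2) l' hmem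
  have hmem1Y : (1:ℕ) ∈ l'.erase (n+2) := (List.mem_erase_of_ne (by omega)).2 hmem1
  set jq := (l'.erase (n+2)).idxOf 1 with hjqdef
  have h2 : ((l'.erase (n+2)).erase 1).insertIdx jq 1 = l'.erase (n+2) :=
    insertIdx_indexOf_erase 1 (l'.erase (n+2)) hmem1Y
  have hYlen : (l'.erase (n+2)).length = n + 1 := by
    rw [List.length_erase_of_mem hmem, hlen]
    omega
  have hjq : jq < n + 1 := by rw [← hYlen]; exact List.idxOf_lt_length_iff.2 hmem1Y
  have hZl : (l'.erase (n+2)).erase 1 = l.map (· + 1) := by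
    have hsub : ∀ x ∈ (l'.erase (n+2)).erase 1, 1 ≤ x := by
      intro x hx
      have : x ∈ l' := List.mem_of_mem_erase (List.mem_of_mem_erase hx)
      have := List.mem_range'_1.1 (hP.mem_iff.1 this)
      omega
    have hcg : ((l'.erase (n+2)).erase 1).map ((· + 1) ∘ (· - 1)) =
        ((l'.erase (n+2)).erase 1).map id :=
      List.map_congr_left (fun x hx => by
        have := hsub x hx
        simp only [Function.comp_apply, id_eq]
        omega)
    rw [← hred, List.map_map, hcg, List.map_id]
  have hl'eq : l' = ((l.map (· + 1)).insertIdx jq 1).insertIdx ip (n+2) := by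
    rw [← hZl, h2, h1]
  have hmlen : (l.map (· + 1)).length = n := by simp [perm_word_length hL]
  have hYlen2 : ((l.map (· + 1)).insertIdx jq 1).length = n + 1 := by
    rw [List.length_insertIdx_of_le_length (by omega), hmlen]
  -- locate the 1 in l'
  have hpos1 : entry l' (jq + 1 + (if ip ≤ jq then 1 else 0)) = 1 := by
    rw [hl'eq]
    by_cases hc : ip ≤ jq
    · rw [if_pos hc]
      rw [entry_insertIdx _ (n+2) ip (by omega) (by omega) (by omega)]
      rw [if_neg (by omega), if_neg (by omega)]
      have e2 : jq + 1 + 1 - 1 = jq + 1 := by omega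
      rw [e2, entry_insertIdx _ 1 jq (by omega) (by omega) (by omega)]
      rw [if_pos rfl]
    · rw [if_neg hc]
      rw [entry_insertIdx _ (n+2) ip (by omega) (by omega) (by omega)]
      rw [if_neg (by omega), if_pos (by omega)]
      rw [entry_insertIdx _ 1 jq (by omega) (by omega) (by omega)]
      rw [if_pos (by omega)]
  have hqeq : jq + 1 + (if ip ≤ jq then 1 else 0) = n + 3 - p := by
    refine entry_inj hP (by omega) (by split_ifs <;> omega) (by omega) (by omega) ?_
    rw [hpos1, hEq]
  have hiieq : jq = ii n p := by
    unfold ii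
    by_cases hc : ip ≤ jq
    · rw [if_pos hc] at hqeq
      rw [if_pos (by omega)]
      omega
    · rw [if_neg hc] at hqeq
      rw [if_neg (by omega)]
      omega
  refine ⟨p, by omega, by omega, hpq, ?_⟩
  rw [hl'eq, hiieq, chi]
  have : ip = p - 1 := by omega
  rw [this]
end HFCC

/-- If `w` is a Baxter permutation of length `n ≥ 1` fixed under half-turn
rotation with `i` left-to-right maxima and `j` right-to-left maxima, then the number of
Baxter permutations `w'` of length `n+2` fixed under half-turn rotation whose reduction
(deleting the values `n+2` and `1` and subtracting `1` from the rest) is `w`, equals `i + j`. -/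
theorem halfFixed_children_count (n : ℕ) (hn : 1 ≤ n) (l : List ℕ)
    (hb : IsBaxter n l) (hf : HalfFixed n l) (i j : ℕ)
    (hi : i = {p : ℕ | 1 ≤ p ∧ p ≤ n ∧ LRMaxAt l p}.ncard)
    (hj : j = {p : ℕ | 1 ≤ p ∧ p ≤ n ∧ RLMaxAt n l p}.ncard) :
    {l' : List ℕ | IsBaxter (n + 2) l' ∧ HalfFixed (n + 2) l' ∧
        ((l'.erase (n + 2)).erase 1).map (· - 1) = l}.ncard = i + j := by
  classical
  have hL : IsPermWord n l := hb.1
  have hl := HFCC.perm_word_length hL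
  have hSet : {l' : List ℕ | IsBaxter (n + 2) l' ∧ HalfFixed (n + 2) l' ∧
      ((l'.erase (n + 2)).erase 1).map (· - 1) = l} =
      (fun p => HFCC.chi n p l) '' {p | HFCC.Cond n p l} := by
    ext l'
    constructor
    · rintro ⟨hb', hf', hred⟩
      obtain ⟨p, hp1, hp2, hpq, heq⟩ := HFCC.reconstruct hL hn hb'.1 hf' hred
      exact ⟨p, HFCC.cond_of_chi_baxter hL hf hn hp1 hp2 hpq (by rw [← heq]; exact hb'),
        heq.symm⟩
    · rintro ⟨p, hp, rfl⟩
      obtain ⟨hp1, hp2, hpq⟩ := HFCC.cond_bounds hp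
      exact ⟨HFCC.chi_baxter_of_cond hL hb hf hn hp, HFCC.chi_halfFixed hL hf hp1 hp2 hpq,
        HFCC.chi_reduce hL hp1 hp2⟩
  have hInj : Set.InjOn (fun p => HFCC.chi n p l) {p | HFCC.Cond n p l} := by
    intro p1 h1 p2 h2 he
    simp only at he
    obtain ⟨a1, b1, c1⟩ := HFCC.cond_bounds h1
    obtain ⟨a2, b2, c2⟩ := HFCC.cond_bounds h2
    by_contra hne
    have hE1 : entry (HFCC.chi n p1 l) p1 = n + 2 := HFCC.entry_chi_at_p hl a1 b1 c1
    have hE2 := HFCC.entry_chi hl a2 b2 c2 (s := p1) a1 b1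
    rw [← he, hE1, if_neg hne] at hE2
    by_cases hq : p1 = n + 3 - p2
    · rw [if_pos hq] at hE2; omega
    · rw [if_neg hq] at hE2
      have hm := HFCC.oo_mem a2 b2 c2 a1 b1 hne hq
      have hbb := HFCC.entry_bounds hL hm.1 hm.2
      omega
  have hPG : {p | HFCC.Cond n p l} =
      HFCC.Phi n '' {t | 1 ≤ t ∧ t ≤ n ∧ LRMaxAt l t} ∪
      HFCC.Psi n '' {t | 1 ≤ t ∧ t ≤ n ∧ RLMaxAt n l t} := by
    ext p
    constructor
    · rintro ⟨t, ht1, ht2, (⟨hm, he⟩ | ⟨hm, he⟩)⟩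
      · exact Or.inl ⟨t, ⟨ht1, ht2, hm⟩, he.symm⟩
      · exact Or.inr ⟨t, ⟨ht1, ht2, hm⟩, he.symm⟩
    · rintro (⟨t, ⟨ht1, ht2, hm⟩, he⟩ | ⟨t, ⟨ht1, ht2, hm⟩, he⟩)
      · exact ⟨t, ht1, ht2, Or.inl ⟨hm, he.symm⟩⟩
      · exact ⟨t, ht1, ht2, Or.inr ⟨hm, he.symm⟩⟩
  have hLRfin : {t : ℕ | 1 ≤ t ∧ t ≤ n ∧ LRMaxAt l t}.Finite :=
    (Set.finite_Icc 1 n).subset (fun x hx => Set.mem_Icc.2 ⟨hx.1, hx.2.1⟩)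
  have hRLfin : {t : ℕ | 1 ≤ t ∧ t ≤ n ∧ RLMaxAt n l t}.Finite :=
    (Set.finite_Icc 1 n).subset (fun x hx => Set.mem_Icc.2 ⟨hx.1, hx.2.1⟩)
  have hdisj : Disjoint (HFCC.Phi n '' {t | 1 ≤ t ∧ t ≤ n ∧ LRMaxAt l t})
      (HFCC.Psi n '' {t | 1 ≤ t ∧ t ≤ n ∧ RLMaxAt n l t}) := by
    rw [Set.disjoint_left]
    rintro x ⟨t, ⟨ht1, ht2, hm⟩, hex⟩ ⟨t', ⟨ht1', ht2', hm'⟩, hex'⟩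
    have heq : HFCC.Phi n t = HFCC.Psi n t' := hex.trans hex'.symm
    unfold HFCC.Phi HFCC.Psi at heq
    split_ifs at heq with h1 h2 h2
    · have htt : t = t' + 1 := by omega
      have w1 := hm' t (by omega) (by omega)
      have w2 := hm t' (by omega) (by omega)
      omega
    · omega
    · omega
    · have htt : t = t' + 1 := by omega
      have w1 := hm' t (by omega) (by omega)
      have w2 := hm t' (by omega) (by omega)
      omega
  have hPhiInj : Set.InjOn (HFCC.Phi n) {t | 1 ≤ t ∧ t ≤ n ∧ LRMaxAt l t} := by
    intro a _ b _ h
    unfold HFCC.Phi at h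
    split_ifs at h <;> omega
  have hPsiInj : Set.InjOn (HFCC.Psi n) {t | 1 ≤ t ∧ t ≤ n ∧ RLMaxAt n l t} := by
    intro a _ b _ h
    unfold HFCC.Psi at h
    split_ifs at h <;> omega
  rw [hSet, Set.ncard_image_of_injOn hInj, hPG,
    Set.ncard_union_eq hdisj (hLRfin.image _) (hRLfin.image _),
    Set.ncard_image_of_injOn hPhiInj, Set.ncard_image_of_injOn hPsiInj, hi, hj]
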